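/- Let n≥0, r≥0 and k≥1 be integers and β=(β_1,…,β_m) a weak composition of n. Then D^{inv}_{r;β,k}(q) = Σ_S q^{Σ_{i=min(S)+1}^{m}(β_i−χ_S(i))} · D^{inv+}_{r;β−χ_S,k−1}(q), where the sum is over all nonempty subsets S of {1,…,m} with χ_S ≤ β componentwise, χ_S∈{0,1}^m is the indicator vector of S, and β−χ_S is the componentwise difference. -/

import Mathlib

open scoped BigOperators

namespace omp

/-- The multiset `A(β) ∪ {0^r}`: the letter `i` (for `1 ≤ i ≤ m`) with multiplicity `β_i`,
together with `r` copies of the letter `0`. -/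
def content (r : ℕ) (β : List ℕ) : Multiset ℕ :=
  Multiset.replicate r 0 +
    ∑ i ∈ Finset.range β.length, Multiset.replicate (β.getD i 0) (i + 1)

/-- `π` is an ordered multiset partition of `A(β) ∪ {0^r}` into `k` (nonempty) blocks,
with `0` allowed anywhere: the set `OP^all_{r;β,k}`. -/
def IsOPall (r : ℕ) (β : List ℕ) (k : ℕ) (π : List (Finset ℕ)) : Prop :=
  π.length = k ∧ (∀ B ∈ π, B.Nonempty) ∧ (π.map Finset.val).sum = content r β

/-- Additionally, the last block does not contain `0`: the set `OP_{r;β,k}`. -/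
def IsOP (r : ℕ) (β : List ℕ) (k : ℕ) (π : List (Finset ℕ)) : Prop :=
  IsOPall r β k π ∧ 0 ∉ π.getLastD ∅

/-- Ordered multiset partitions of `A(β) ∪ {0^r}` with shape `α`: `OP^all_{r;β,α}`. -/
def IsOPallSh (r : ℕ) (β α : List ℕ) (π : List (Finset ℕ)) : Prop :=
  (∀ B ∈ π, B.Nonempty) ∧ (π.map Finset.val).sum = content r β ∧
    π.map Finset.card = α

/-- Shape `α` and last block avoiding `0`: `OP_{r;β,α}`. -/
def IsOPSh (r : ℕ) (β α : List ℕ) (π : List (Finset ℕ)) : Prop :=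
  IsOPallSh r β α π ∧ 0 ∉ π.getLastD ∅

/-- The `i`-th block (0-indexed). -/
def blk (π : List (Finset ℕ)) (i : ℕ) : Finset ℕ := π.getD i ∅

/-- `inv`: pairs of a letter `a` in block `B_i` and the minimum `b` of a later block `B_j`
with `a > b`. -/
def inv (π : List (Finset ℕ)) : ℕ :=
  ∑ i ∈ Finset.range π.length, ∑ j ∈ Finset.range π.length,
    if i < j then
      (@Finset.filter ℕ (fun (a : ℕ) => (blk π j).min < (a : WithBot ℕ))
        (fun _ => WithTop.decidableLT _ _) (blk π i)).card
    else 0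

/-- The word `σ(π)`: each block written in decreasing order, blocks concatenated. -/
def sigmaWord (π : List (Finset ℕ)) : List ℕ :=
  (π.map (fun B => (B.sort (· ≤ ·)).reverse)).flatten

/-- The word `ind(π) = 0^{|B_1|} 1^{|B_2|} ⋯ (k-1)^{|B_k|}`. -/
def indWord (π : List (Finset ℕ)) : List ℕ :=
  ((π.zipIdx.map Prod.swap).map (fun p => List.replicate p.2.card p.1)).flatten

/-- The major index of a word (positions are 1-based). -/
def majW (w : List ℕ) : ℕ :=
  ∑ i ∈ Finset.range (w.length - 1),
    if w.getD (i + 1) 0 < w.getD i 0 then i + 1 else 0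

/-- `maj(π)`: the sum of `ind(π)_{i+1}` over descents `σ_i > σ_{i+1}` of `σ(π)`. -/
def maj (π : List (Finset ℕ)) : ℕ :=
  ∑ i ∈ Finset.range ((sigmaWord π).length - 1),
    if (sigmaWord π).getD (i + 1) 0 < (sigmaWord π).getD i 0 then
      (indWord π).getD (i + 1) 0
    else 0

/-- `dinv(π)`: primary and secondary diagonal inversions, where `B_i^h` is the `h`-th smallest
element of block `B_i` (here `h` is 0-indexed). -/
def dinv (π : List (Finset ℕ)) : ℕ :=
  ∑ i ∈ Finset.range π.length, ∑ j ∈ Finset.range π.length,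
    if i < j then
      ((Finset.range (blk π i).card).filter (fun h =>
          h < (blk π j).card ∧
            ((blk π j).sort (· ≤ ·)).getD h 0 < ((blk π i).sort (· ≤ ·)).getD h 0)).card +
      ((Finset.range (blk π i).card).filter (fun h =>
          h + 1 < (blk π j).card ∧
            ((blk π j).sort (· ≤ ·)).getD (h + 1) 0 < ((blk π i).sort (· ≤ ·)).getD h 0)).card
    else 0

/-- `miniword(π)`, built from right to left: the last block in increasing order; inductively,
if the word built so far begins with `s`, block `B_i` contributes its elements greater than `s`
in increasing order followed by its elements at most `s` in increasing order. -/
def miniword : List (Finset ℕ) → List ℕ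
  | [] => []
  | B :: rest =>
    match miniword rest with
    | [] => B.sort (· ≤ ·)
    | s :: w =>
        ((B.filter (fun x => s < x)).sort (· ≤ ·) ++
          (B.filter (fun x => x ≤ s)).sort (· ≤ ·)) ++ s :: w

/-- `minimaj(π) = maj(miniword(π))`. -/
def minimaj (π : List (Finset ℕ)) : ℕ := majW (miniword π)

/-- `D^{stat}_{r;β,k}(q) = Σ_{π ∈ OP_{r;β,k}} q^{stat(π)}` (the set is finite, so the
finite-support sum below is the intended polynomial). -/
noncomputable def D (r : ℕ) (β : List ℕ) (k : ℕ)
    (stat : List (Finset ℕ) → ℕ) : Polynomial ℕ :=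
  ∑ᶠ π ∈ {π | IsOP r β k π}, Polynomial.X ^ stat π

/-- `D^{stat+}_{r;β,k}(q) = Σ_{π ∈ OP^all_{r;β,k}} q^{stat(π)}`. -/
noncomputable def Dall (r : ℕ) (β : List ℕ) (k : ℕ)
    (stat : List (Finset ℕ) → ℕ) : Polynomial ℕ :=
  ∑ᶠ π ∈ {π | IsOPall r β k π}, Polynomial.X ^ stat π

/-- `D^{stat}_{r;β,α}(q)`, the shape-refined generating function. -/
noncomputable def DSh (r : ℕ) (β α : List ℕ)
    (stat : List (Finset ℕ) → ℕ) : Polynomial ℕ :=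
  ∑ᶠ π ∈ {π | IsOPSh r β α π}, Polynomial.X ^ stat π

/-- `D^{stat+}_{r;β,α}(q)`, the shape-refined generating function with `0` allowed
in the last block. -/
noncomputable def DallSh (r : ℕ) (β α : List ℕ)
    (stat : List (Finset ℕ) → ℕ) : Polynomial ℕ :=
  ∑ᶠ π ∈ {π | IsOPallSh r β α π}, Polynomial.X ^ stat π

end omp

namespace omp

/-- The list `β − χ_S`: subtract `1` from `β_i` (1-indexed) for each `i ∈ S`. -/
def subInd (β : List ℕ) (S : Finset ℕ) : List ℕ :=
  (List.range β.length).map (fun i => β.getD i 0 - if i + 1 ∈ S then 1 else 0)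

/-- The exponent `Σ_{i = min(S)+1}^{m} (β_i − χ_S(i))`. -/
def wExp (β : List ℕ) (S : Finset ℕ) : ℕ :=
  ∑ i ∈ @Finset.filter ℕ (fun (i : ℕ) => S.min < (i : WithBot ℕ))
      (fun _ => WithTop.decidableLT _ _) (Finset.Icc 1 β.length),
    (β.getD (i - 1) 0 - if i ∈ S then 1 else 0)

end omp

/-!
Removing the last block `S` of `π ∈ OP_{r;β,k}` leaves an arbitrary `π' ∈ OP^all_{r;β−χ_S,k−1}`;
since `S` avoids `0`, the possible last blocks are exactly the nonempty sets of letters available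
in `A(β)`. A later block only contributes inversions through its minimum, so appending `S` adds one
inversion for each letter of `π'` exceeding `min S`, and these letters are the letters of
`A(β−χ_S) ∪ {0^r}` larger than `min S`: that count is the exponent `wExp β S`.
-/

namespace omp

open Finset

theorem subInd_length (β : List ℕ) (S : Finset ℕ) : (subInd β S).length = β.length := by
  simp [subInd]

theorem subInd_getD (β : List ℕ) (S : Finset ℕ) (i : ℕ) :
    (subInd β S).getD i 0 = β.getD i 0 - if i + 1 ∈ S then 1 else 0 := by
  by_cases hi : i < β.length
  · simp [subInd, hi]
  · simp [subInd, not_lt.1 hi]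

theorem countP_content (r : ℕ) (β : List ℕ) (p : ℕ → Prop) [DecidablePred p] :
    (content r β).countP p =
      (if p 0 then r else 0) + ∑ i ∈ Icc 1 β.length, if p i then β.getD (i - 1) 0 else 0 := by
  have countP_replicate (n a : ℕ) : (Multiset.replicate n a).countP p = if p a then n else 0 := by
    rw [← Multiset.coe_replicate, Multiset.coe_countP, List.countP_replicate]
    simp
  rw [content, Multiset.countP_add, ← Multiset.coe_countPAddMonoidHom, map_sum]
  simp only [Multiset.coe_countPAddMonoidHom, countP_replicate]
  congr 1
  rw [range_eq_Ico]
  exact sum_Ico_add' (fun i => if p i then β.getD (i - 1) 0 else 0) 0 β.length 1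

theorem count_content (r : ℕ) (β : List ℕ) (a : ℕ) :
    (content r β).count a = if a = 0 then r else β.getD (a - 1) 0 := by
  rw [Multiset.count, countP_content, sum_ite_eq]
  rcases eq_or_ne a 0 with rfl | ha
  · simp
  · rw [if_neg ha, if_neg ha, zero_add]
    split_ifs with h
    · rfl
    · exact (List.getD_eq_default _ _ (by rw [mem_Icc] at h; omega)).symm

theorem content_subInd (r : ℕ) (β : List ℕ) {S : Finset ℕ} (h0 : 0 ∉ S) :
    content r (subInd β S) = content r β - S.val := by
  ext a
  rw [Multiset.count_sub, count_content, count_content, Multiset.count_eq_of_nodup S.nodup]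
  rcases a with _ | a
  · simp [h0]
  · simp only [Nat.add_one_ne_zero, if_false, Nat.add_sub_cancel, subInd_getD, mem_val]

theorem val_le_content_iff (r : ℕ) (β : List ℕ) {S : Finset ℕ} (h0 : 0 ∉ S) :
    S.val ≤ content r β ↔ ∀ i ∈ S, 1 ≤ β.getD (i - 1) 0 := by
  rw [Multiset.le_iff_subset S.nodup, Multiset.subset_iff]
  refine forall₂_congr fun i hi => ?_
  rw [← Multiset.count_pos, count_content, if_neg (ne_of_mem_of_not_mem hi h0)]
  rfl

def lastBlocks (β : List ℕ) : Finset (Finset ℕ) :=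
  (Icc 1 β.length).powerset.filter (fun S => S.Nonempty ∧ ∀ i ∈ S, 1 ≤ β.getD (i - 1) 0)

theorem mem_lastBlocks (r : ℕ) {β : List ℕ} {S : Finset ℕ} :
    S ∈ lastBlocks β ↔ S.Nonempty ∧ 0 ∉ S ∧ S.val ≤ content r β := by
  rw [lastBlocks, mem_filter, mem_powerset]
  constructor
  · rintro ⟨hsub, hne, hpos⟩
    have h0 : 0 ∉ S := fun h => by simpa using hsub h
    exact ⟨hne, h0, (val_le_content_iff r β h0).2 hpos⟩
  · rintro ⟨hne, h0, hle⟩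
    have hpos := (val_le_content_iff r β h0).1 hle
    refine ⟨fun i hi => mem_Icc.2 ⟨?_, ?_⟩, hne, hpos⟩
    · exact Nat.one_le_iff_ne_zero.2 (ne_of_mem_of_not_mem hi h0)
    · by_contra! hlen
      have := hpos i hi
      rw [List.getD_eq_default _ _ (by omega)] at this
      omega

theorem isOP_concat_iff (r k : ℕ) (β : List ℕ) (π : List (Finset ℕ)) (S : Finset ℕ) :
    IsOP r β (k + 1) (π ++ [S]) ↔ S ∈ lastBlocks β ∧ IsOPall r (subInd β S) k π := by
  simp only [IsOP, IsOPall, mem_lastBlocks r, List.length_append, List.length_singleton,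
    add_left_inj, List.mem_append, List.mem_singleton, or_imp, forall_and, forall_eq,
    List.map_append, List.map_cons, List.map_nil, List.sum_append, List.sum_cons, List.sum_nil,
    add_zero, List.getLastD_concat]
  constructor
  · rintro ⟨⟨hlen, ⟨hne, hSne⟩, hsum⟩, h0⟩
    have hle : S.val ≤ content r β := hsum ▸ Multiset.le_add_left _ _
    refine ⟨⟨hSne, h0, hle⟩, hlen, hne, ?_⟩
    rw [content_subInd r β h0, eq_tsub_iff_add_eq_of_le hle, hsum]
  · rintro ⟨⟨hSne, h0, hle⟩, hlen, hne, hsum⟩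
    refine ⟨⟨hlen, ⟨hne, hSne⟩, ?_⟩, h0⟩
    rw [← eq_tsub_iff_add_eq_of_le hle, hsum, content_subInd r β h0]

theorem finite_isOPall (r k : ℕ) (β : List ℕ) : {π | IsOPall r β k π}.Finite := by
  set T := (content r β).toFinset.powerset
  refine ((List.finite_length_eq T k).image (List.map Subtype.val)).subset ?_
  rintro π ⟨hlen, -, hsum⟩
  have hT : ∀ B ∈ π, B ∈ T := fun B hB => mem_powerset.2 fun a ha => Multiset.mem_toFinset.2 <|
    hsum ▸ Multiset.mem_of_le (List.le_sum_of_mem (List.mem_map_of_mem hB)) ha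
  lift π to List T using hT
  exact ⟨π, by simpa using hlen, rfl⟩

theorem finsum_isOP_succ {M : Type*} [AddCommMonoid M] (r k : ℕ) (β : List ℕ)
    (f : List (Finset ℕ) → M) :
    ∑ᶠ π ∈ {π | IsOP r β (k + 1) π}, f π =
      ∑ S ∈ lastBlocks β, ∑ᶠ π ∈ {π | IsOPall r (subInd β S) k π}, f (π ++ [S]) := by
  rw [finsum_mem_eq_finite_toFinset_sum _ ((finite_isOPall r (k + 1) β).subset fun _ h => h.1)]
  rw [sum_congr rfl fun S _ => finsum_mem_eq_finite_toFinset_sum _ (finite_isOPall r k _),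
    sum_sigma']
  symm
  refine sum_bij (fun p _ => p.2 ++ [p.1]) ?_ ?_ ?_ fun _ _ => rfl
  · rintro ⟨S, π⟩ h
    simpa [isOP_concat_iff] using h
  · rintro ⟨S₁, π₁⟩ - ⟨S₂, π₂⟩ - h
    obtain ⟨rfl, h⟩ := List.append_inj' h rfl
    simp_all
  · intro π hπ
    rw [Set.Finite.mem_toFinset] at hπ
    obtain ⟨π, S, rfl⟩ := (List.eq_nil_or_concat' π).resolve_left fun h => by
      simpa [h] using hπ.1.1
    exact ⟨⟨S, π⟩, by simpa [isOP_concat_iff] using hπ, rfl⟩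

/-- The predicate filtering `inv` and `wExp`, named to carry their decidability instance, which
instance search does not find. -/
def AboveMin (B : Finset ℕ) (a : ℕ) : Prop := B.min < (a : WithBot ℕ)

instance (B : Finset ℕ) : DecidablePred (AboveMin B) := fun _ => WithTop.decidableLT _ _

theorem not_aboveMin_zero (B : Finset ℕ) : ¬ AboveMin B 0 :=
  not_lt_zero

theorem blk_concat_of_lt {π : List (Finset ℕ)} (S : Finset ℕ) {i : ℕ} (h : i < π.length) :
    blk (π ++ [S]) i = blk π i :=
  List.getD_append _ _ _ _ h

theorem blk_concat_length (π : List (Finset ℕ)) (S : Finset ℕ) : blk (π ++ [S]) π.length = S := by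
  simp [blk]

theorem sum_card_filter_blk (π : List (Finset ℕ)) (p : ℕ → Prop) [DecidablePred p] :
    ∑ i ∈ range π.length, ((blk π i).filter p).card = ((π.map Finset.val).sum).countP p := by
  induction π with
  | nil => simp
  | cons B π ih =>
    rw [List.length_cons, sum_range_succ', List.map_cons, List.sum_cons, Multiset.countP_add,
      ← ih, add_comm, Multiset.countP_eq_card_filter]
    rfl

theorem sum_range_succ_triangle {M : Type*} [AddCommMonoid M] (F : ℕ → ℕ → M) (n : ℕ) :
    ∑ i ∈ range (n + 1), ∑ j ∈ range (n + 1), (if i < j then F i j else 0) =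
      ∑ i ∈ range n, ∑ j ∈ range n, (if i < j then F i j else 0) + ∑ i ∈ range n, F i n := by
  rw [sum_range_succ, sum_eq_zero fun j hj => if_neg (by simp at hj; omega), add_zero,
    ← sum_add_distrib]
  refine sum_congr rfl fun i hi => ?_
  rw [sum_range_succ, if_pos (mem_range.1 hi)]

theorem inv_concat (π : List (Finset ℕ)) (S : Finset ℕ) :
    inv (π ++ [S]) = inv π + ((π.map Finset.val).sum).countP (AboveMin S) := by
  rw [← sum_card_filter_blk, inv, inv, List.length_append, List.length_singleton,
    sum_range_succ_triangle]
  congr 1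
  · refine sum_congr rfl fun i hi => sum_congr rfl fun j hj => ?_
    rw [blk_concat_of_lt S (mem_range.1 hi), blk_concat_of_lt S (mem_range.1 hj)]
  · refine sum_congr rfl fun i hi => ?_
    rw [blk_concat_of_lt S (mem_range.1 hi), blk_concat_length]
    rfl

theorem countP_aboveMin_content_subInd (r : ℕ) (β : List ℕ) (S : Finset ℕ) :
    (content r (subInd β S)).countP (AboveMin S) = wExp β S := by
  rw [countP_content, if_neg (not_aboveMin_zero S), zero_add, subInd_length, wExp, sum_filter]
  refine sum_congr rfl fun i hi => ?_
  obtain ⟨j, rfl⟩ : ∃ j, i = j + 1 := ⟨i - 1, by rw [mem_Icc] at hi; omega⟩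
  rw [Nat.add_sub_cancel, subInd_getD]
  rfl

theorem inv_concat_of_isOPall {r k : ℕ} {β : List ℕ} {S : Finset ℕ} {π : List (Finset ℕ)}
    (hπ : IsOPall r (subInd β S) k π) : inv (π ++ [S]) = wExp β S + inv π := by
  rw [inv_concat, hπ.2.2, countP_aboveMin_content_subInd, add_comm]

end omp

theorem inv_recursion_general (r k : ℕ) (hk : 1 ≤ k) (β : List ℕ) :
    omp.D r β k omp.inv =
      ∑ S ∈ (Finset.Icc 1 β.length).powerset.filter
          (fun S => S.Nonempty ∧ ∀ i ∈ S, 1 ≤ β.getD (i - 1) 0),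
        Polynomial.X ^ omp.wExp β S *
          omp.Dall r (omp.subInd β S) (k - 1) omp.inv := by
  obtain ⟨k, rfl⟩ := Nat.exists_eq_add_of_le' hk
  rw [omp.D, omp.finsum_isOP_succ, Nat.add_sub_cancel]
  refine Finset.sum_congr rfl fun S _ => ?_
  rw [omp.Dall, mul_finsum_mem]
  refine finsum_mem_congr rfl fun π hπ => ?_
  rw [omp.inv_concat_of_isOPall hπ, pow_add]

/-- The recursion for `inv`:
`D^{inv}_{r;β,k} = Σ_S q^{Σ_{i=min(S)+1}^m (β_i − χ_S(i))} · D^{inv+}_{r;β−χ_S,k−1}`,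
summed over nonempty `S ⊆ {1,…,m}` with `χ_S ≤ β`. -/
theorem inv_recursion (n r k : ℕ) (hk : 1 ≤ k) (β : List ℕ) (hβ : β.sum = n) :
    omp.D r β k omp.inv =
      ∑ S ∈ (Finset.Icc 1 β.length).powerset.filter
          (fun S => S.Nonempty ∧ ∀ i ∈ S, 1 ≤ β.getD (i - 1) 0),
        Polynomial.X ^ omp.wExp β S *
          omp.Dall r (omp.subInd β S) (k - 1) omp.inv :=
  inv_recursion_general r k hk β
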